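/- Let k ≥ 1 be an integer, let a be a real number, let b_1 ≤ b_2 ≤ ... ≤ b_{k+1} be real numbers with a < b_1, and let P be a real number with a < P < b_1. Let X_1, ..., X_{k+1} be independent real random variables on a common probability space, where X_j has the uniform distribution on [a, b_j]. Then the probability of the event { X_{k+1} ≤ X_j for all j = 1, ..., k+1 } ∩ { X_{k+1} ≤ P } is at most (1/(k+1)) · ( 1 − ( 1 − (P − a)/(b_k − a) )^{k+1} ). -/

import Mathlib

/-! Conditioning on the value `t` of `X_{k+1}`, independence writes the probability as
`∫_a^P ∏_{j ≤ k} ℙ(X_j ≥ t) dt / (b_{k+1} - a)`. For `t ≥ a` the tail `(b_j - t)/(b_j - a)` of a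
uniform law on `[a, b_j]` is increasing in `b_j`, so each factor is at most `(b_k - t)/(b_k - a)`,
and `b_{k+1} ≥ b_k`; integrating `((b_k - t)/(b_k - a))^k` over `[a, P]` gives the bound. -/

open MeasureTheory ProbabilityTheory

/-- The uniform (normalized Lebesgue) probability law on the interval `[a, b]`. -/
noncomputable def uniformLaw (a b : ℝ) : Measure ℝ :=
  (volume (Set.Icc a b))⁻¹ • volume.restrict (Set.Icc a b)

open Set
open scoped ENNReal

lemma uniformLaw_eq_cond (a b : ℝ) : uniformLaw a b = volume[|Icc a b] := rfl

lemma isProbabilityMeasure_uniformLaw {a b : ℝ} (hab : a < b) :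
    IsProbabilityMeasure (uniformLaw a b) := by
  rw [uniformLaw_eq_cond]
  exact cond_isProbabilityMeasure_of_finite (by simp [hab]) (by simp)

lemma uniformLaw_Ici {a c : ℝ} (hac : a < c) (x : ℝ) :
    uniformLaw a c (Ici x) = ENNReal.ofReal ((c - max a x) / (c - a)) := by
  have hinter : Icc a c ∩ Ici x = Icc (max a x) c := by
    ext y; simp only [mem_inter_iff, mem_Icc, mem_Ici, max_le_iff]; tauto
  rw [uniformLaw_eq_cond, cond_apply measurableSet_Icc, hinter, Real.volume_Icc, Real.volume_Icc,
    ENNReal.ofReal_div_of_pos (by linarith), ENNReal.div_eq_inv_mul]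

lemma uniformLaw_Ici_le {a c B : ℝ} (hac : a < c) (hcB : c ≤ B) (x : ℝ) :
    uniformLaw a c (Ici x) ≤ ENNReal.ofReal (1 - (x - a) / (B - a)) := by
  rw [uniformLaw_Ici hac]
  refine ENNReal.ofReal_le_ofReal ?_
  rcases le_total x a with hxa | hax
  · rw [max_eq_left hxa, div_self (sub_pos.2 hac).ne', le_sub_self_iff]
    exact div_nonpos_of_nonpos_of_nonneg (by linarith) (by linarith)
  · rw [max_eq_right hax, one_sub_div (by linarith), div_le_div_iff₀ (by linarith) (by linarith)]
    nlinarith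

lemma pi_setOf_forall_le_and_mem_eq_setLIntegral {n : ℕ} (ν : Fin (n + 1) → Measure ℝ)
    [∀ i, SigmaFinite (ν i)] (i : Fin (n + 1)) {s : Set ℝ} (hs : MeasurableSet s) :
    Measure.pi ν {x | (∀ j, x i ≤ x j) ∧ x i ∈ s} =
      ∫⁻ t in s, ∏ j, ν (i.succAbove j) (Ici t) ∂ν i := by
  set T : Set (ℝ × (Fin n → ℝ)) := {p | p.1 ∈ s ∧ ∀ j, p.1 ≤ p.2 j}
  have hT : MeasurableSet T := by
    simp only [T, ofPred_and, ofPred_forall]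
    exact (measurable_fst hs).inter <| .iInter fun j =>
      measurableSet_le measurable_fst ((measurable_pi_apply j).comp measurable_snd)
  have hpre : {x : Fin (n + 1) → ℝ | (∀ j, x i ≤ x j) ∧ x i ∈ s} =
      MeasurableEquiv.piFinSuccAbove (fun _ => ℝ) i ⁻¹' T := by
    ext x
    change _ ↔ x i ∈ s ∧ ∀ j, x i ≤ x (i.succAbove j)
    rw [mem_ofPred_eq, Fin.forall_iff_succAbove i, and_comm]
    exact and_congr_right fun _ => and_iff_right le_rfl
  rw [hpre, (measurePreserving_piFinSuccAbove ν i).measure_preimage hT.nullMeasurableSet,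
    Measure.prod_apply hT, ← lintegral_indicator hs]
  refine lintegral_congr fun t => ?_
  by_cases ht : t ∈ s
  · rw [indicator_of_mem ht, ← Measure.pi_pi]
    congr 1
    ext y
    simp [T, ht, Pi.le_def]
  · rw [indicator_of_notMem ht]
    convert measure_empty (μ := Measure.pi fun j => ν (i.succAbove j))
    ext y
    simp [T, ht]

lemma setLIntegral_Iic_uniformLaw {a c P : ℝ} (hPc : P ≤ c) (f : ℝ → ℝ≥0∞) :
    ∫⁻ t in Iic P, f t ∂uniformLaw a c = (ENNReal.ofReal (c - a))⁻¹ * ∫⁻ t in Icc a P, f t := by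
  have hinter : Iic P ∩ Icc a c = Icc a P := by
    ext t; simp only [mem_inter_iff, mem_Iic, mem_Icc]
    constructor
    · rintro ⟨htP, hat, -⟩; exact ⟨hat, htP⟩
    · rintro ⟨hat, htP⟩; exact ⟨htP, hat, htP.trans hPc⟩
  rw [uniformLaw, Measure.restrict_smul, lintegral_smul_measure,
    Measure.restrict_restrict measurableSet_Iic, hinter, Real.volume_Icc, smul_eq_mul]

lemma integral_one_sub_div_pow {a B : ℝ} (haB : a ≠ B) (P : ℝ) (k : ℕ) :
    ∫ t in a..P, (1 - (t - a) / (B - a)) ^ k =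
      (B - a) / (k + 1) * (1 - (1 - (P - a) / (B - a)) ^ (k + 1)) := by
  have hBa : B - a ≠ 0 := sub_ne_zero.2 haB.symm
  have hderiv : ∀ t, HasDerivAt (fun t => -((B - a) / (k + 1)) * (1 - (t - a) / (B - a)) ^ (k + 1))
      ((1 - (t - a) / (B - a)) ^ k) t := by
    intro t
    have hinner : HasDerivAt (fun t => 1 - (t - a) / (B - a)) (-(1 / (B - a))) t := by
      simpa using (((hasDerivAt_id t).sub_const a).div_const (B - a)).const_sub 1
    refine ((hinner.pow (k + 1)).const_mul (-((B - a) / (k + 1)))).congr_deriv ?_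
    push_cast
    field_simp
  rw [intervalIntegral.integral_eq_sub_of_hasDerivAt (fun t _ => hderiv t)
    ((by fun_prop : Continuous _).intervalIntegrable _ _)]
  simp only [sub_self, zero_div, sub_zero, one_pow]
  ring

lemma lintegral_Icc_one_sub_div_pow {a B P : ℝ} (haP : a ≤ P) (hPB : P ≤ B) (haB : a < B)
    (k : ℕ) :
    ∫⁻ t in Icc a P, ENNReal.ofReal ((1 - (t - a) / (B - a)) ^ k) =
      ENNReal.ofReal ((B - a) / (k + 1) * (1 - (1 - (P - a) / (B - a)) ^ (k + 1))) := by
  have hnonneg : 0 ≤ᵐ[volume.restrict (Icc a P)] fun t => (1 - (t - a) / (B - a)) ^ k := by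
    filter_upwards [ae_restrict_mem measurableSet_Icc] with t ht
    exact pow_nonneg (sub_nonneg.2 <| (div_le_one (by linarith)).2 (by linarith [ht.2])) k
  rw [← ofReal_integral_eq_lintegral_ofReal (by fun_prop : Continuous _).integrableOn_Icc hnonneg,
    integral_Icc_eq_integral_Ioc, ← intervalIntegral.integral_of_le haP,
    integral_one_sub_div_pow haB.ne]

lemma setLIntegral_Iic_uniformLaw_one_sub_div_pow_le {a B c P : ℝ} (haP : a ≤ P) (hPB : P ≤ B)
    (hBc : B ≤ c) (haB : a < B) (k : ℕ) :
    ∫⁻ t in Iic P, ENNReal.ofReal ((1 - (t - a) / (B - a)) ^ k) ∂uniformLaw a c ≤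
      ENNReal.ofReal (1 / (k + 1) * (1 - (1 - (P - a) / (B - a)) ^ (k + 1))) := by
  set Q := 1 - (1 - (P - a) / (B - a)) ^ (k + 1)
  calc _ = (ENNReal.ofReal (c - a))⁻¹ * ENNReal.ofReal ((B - a) / (k + 1) * Q) := by
        rw [setLIntegral_Iic_uniformLaw (hPB.trans hBc), lintegral_Icc_one_sub_div_pow haP hPB haB]
    _ ≤ (ENNReal.ofReal (B - a))⁻¹ * ENNReal.ofReal ((B - a) / (k + 1) * Q) := by
        gcongr
    _ = ENNReal.ofReal (1 / (k + 1) * Q) := by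
        rw [← ENNReal.ofReal_inv_of_pos (by linarith), ← ENNReal.ofReal_mul (by positivity)]
        congr 1
        field_simp [(sub_pos.2 haB).ne']

lemma one_sub_one_sub_div_pow_nonneg {a B P : ℝ} (haP : a ≤ P) (hPB : P ≤ B) (n : ℕ) :
    0 ≤ 1 - (1 - (P - a) / (B - a)) ^ n := by
  have hratio_nonneg : 0 ≤ (P - a) / (B - a) := div_nonneg (by linarith) (by linarith)
  have hratio_le : (P - a) / (B - a) ≤ 1 := div_le_one_of_le₀ (by linarith) (by linarith)
  exact sub_nonneg.2 (pow_le_one₀ (by linarith) (by linarith))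

lemma prod_uniformLaw_Ici_le {k : ℕ} {a B t : ℝ} {c : Fin k → ℝ} (hac : ∀ j, a < c j)
    (hcB : ∀ j, c j ≤ B) (haB : a < B) (htB : t ≤ B) :
    ∏ j, uniformLaw a (c j) (Ici t) ≤ ENNReal.ofReal ((1 - (t - a) / (B - a)) ^ k) := by
  have hbase : 0 ≤ 1 - (t - a) / (B - a) :=
    sub_nonneg.2 <| (div_le_one (sub_pos.2 haB)).2 (by linarith)
  calc ∏ j, uniformLaw a (c j) (Ici t) ≤ ∏ _j : Fin k, ENNReal.ofReal (1 - (t - a) / (B - a)) :=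
        Finset.prod_le_prod' fun j _ => uniformLaw_Ici_le (hac j) (hcB j) t
    _ = ENNReal.ofReal ((1 - (t - a) / (B - a)) ^ k) := by
        rw [Finset.prod_const, Finset.card_univ, Fintype.card_fin, ENNReal.ofReal_pow hbase]

theorem stmt_3 {Ω : Type*} [MeasurableSpace Ω] (μ : Measure Ω)
    (k : ℕ) (a : ℝ) (b : Fin (k + 1) → ℝ)
    (hb_mono : Monotone b)
    (P : ℝ) (haP : a < P) (hPb : P < b 0)
    (X : Fin (k + 1) → Ω → ℝ)
    (hindep : iIndepFun X μ)
    (hlaw : ∀ j, Measure.map (X j) μ = uniformLaw a (b j)) :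
    (μ ({ω | ∀ j, X (Fin.last k) ω ≤ X j ω} ∩ {ω | X (Fin.last k) ω ≤ P})).toReal ≤
      (1 / (k + 1)) *
        (1 - (1 - (P - a) / (b ⟨k - 1, by omega⟩ - a)) ^ (k + 1)) := by
  set B := b ⟨k - 1, by omega⟩
  have hab : ∀ j, a < b j := fun j => (haP.trans hPb).trans_le (hb_mono (Fin.zero_le j))
  have hPB : P ≤ B := hPb.le.trans (hb_mono (Fin.zero_le _))
  have hbB : ∀ j : Fin k, b ((Fin.last k).succAbove j) ≤ B := fun j => by
    rw [Fin.succAbove_last]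
    exact hb_mono (Fin.le_def.2 (by simp only [Fin.val_castSucc]; omega))
  have haB : a < B := haP.trans_le hPB
  have := fun j => isProbabilityMeasure_uniformLaw (hab j)
  have hX : ∀ j, AEMeasurable (X j) μ := fun j =>
    .of_map_ne_zero (by rw [hlaw j]; exact IsProbabilityMeasure.ne_zero _)
  have hjoint : μ.map (fun ω j => X j ω) = Measure.pi fun j => uniformLaw a (b j) := by
    simp_rw [hindep.map_fun_eq_pi_map hX, hlaw]
  refine ENNReal.toReal_le_of_le_ofReal
    (mul_nonneg (by positivity) (one_sub_one_sub_div_pow_nonneg haP.le hPB _)) ?_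
  calc μ _ ≤ Measure.pi (fun j => uniformLaw a (b j))
        {x | (∀ j, x (Fin.last k) ≤ x j) ∧ x (Fin.last k) ∈ Iic P} :=
        hjoint ▸ Measure.le_map_apply (aemeasurable_pi_lambda _ hX) _
    _ = ∫⁻ t in Iic P, ∏ j : Fin k, uniformLaw a (b ((Fin.last k).succAbove j)) (Ici t)
          ∂uniformLaw a (b (Fin.last k)) :=
        pi_setOf_forall_le_and_mem_eq_setLIntegral _ _ measurableSet_Iic
    _ ≤ ∫⁻ t in Iic P, ENNReal.ofReal ((1 - (t - a) / (B - a)) ^ k)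
          ∂uniformLaw a (b (Fin.last k)) :=
        setLIntegral_mono' measurableSet_Iic fun t ht =>
          prod_uniformLaw_Ici_le (fun j => hab _) hbB haB (le_trans ht hPB)
    _ ≤ _ := setLIntegral_Iic_uniformLaw_one_sub_div_pow_le haP.le hPB
        (hb_mono (Fin.le_last _)) haB k
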